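/- For any trace-preserving linear map 𝒞 on 2×2 complex matrices, the entanglement fidelity F(𝒞) = ⟨φ|(ℐ⊗𝒞)(|φ⟩⟨φ|)|φ⟩ with |φ⟩ = (|00⟩+|11⟩)/√2 satisfies F(𝒞) = (1/4)·Σ_{P∈{X,Y,Z}, b∈{0,1}} Tr[𝒞(Π_{P,b}) Π_{P,b}] − 1/2, where Π_{P,b} = (I + (−1)^b P)/2. -/

import Mathlib

open Matrix Complex Kronecker
open scoped BigOperators

noncomputable section

def Xp : Matrix (Fin 2) (Fin 2) ℂ := !![0, 1; 1, 0]
def Yp : Matrix (Fin 2) (Fin 2) ℂ := !![0, -Complex.I; Complex.I, 0]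
def Zp : Matrix (Fin 2) (Fin 2) ℂ := !![1, 0; 0, -1]

/-- Projector onto the eigenstate of the Pauli `P` with eigenvalue `(−1)^b`. -/
def proj (P : Matrix (Fin 2) (Fin 2) ℂ) (b : Fin 2) : Matrix (Fin 2) (Fin 2) ℂ :=
  ((1 : ℂ) / 2) • (1 + ((-1 : ℂ) ^ (b : ℕ)) • P)

/-- The maximally entangled two-qubit state `|φ⟩ = (|00⟩+|11⟩)/√2`. -/
def phi : Fin 2 × Fin 2 → ℂ := fun p => if p.1 = p.2 then (1 / Real.sqrt 2 : ℝ) else 0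

def E (a b : Fin 2) : Matrix (Fin 2) (Fin 2) ℂ := Matrix.single a b 1

/-- `(ℐ ⊗ 𝒞)(|φ⟩⟨φ|)`. -/
def idTensorApplyPhi (C : Matrix (Fin 2) (Fin 2) ℂ →ₗ[ℂ] Matrix (Fin 2) (Fin 2) ℂ) :
    Matrix (Fin 2 × Fin 2) (Fin 2 × Fin 2) ℂ :=
  ((1 : ℂ) / 2) • ∑ a : Fin 2, ∑ b : Fin 2, (E a b) ⊗ₖ (C (E a b))

/-!
Both sides are quadratic in the matrix units `E a b` through the bilinear form
`B(M, N) = Tr[𝒞(M) N]`. The fidelity equals `¼ Σ_{a,b} B(E a b, E b a)`; averaging over `b` kills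
the cross terms of `B(Π_{P,b}, Π_{P,b})`, leaving `½ (B(1, 1) + B(P, P))`; and the Pauli
completeness relation `Σ_{P ∈ {1,X,Y,Z}} P ⊗ P = 2 · SWAP` identifies the two sides once
`B(1, 1) = Tr 𝒞(1) = 2`.
-/

local notation "M₂" => Matrix (Fin 2) (Fin 2) ℂ

lemma one_eq_E : (1 : M₂) = E 0 0 + E 1 1 := by
  ext i j; fin_cases i <;> fin_cases j <;> simp [E, one_apply]

lemma Xp_eq_E : Xp = E 0 1 + E 1 0 := by
  ext i j; fin_cases i <;> fin_cases j <;> simp [E, Xp]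

lemma Yp_eq_E : Yp = (-I) • E 0 1 + I • E 1 0 := by
  ext i j; fin_cases i <;> fin_cases j <;> simp [E, Yp]

lemma Zp_eq_E : Zp = E 0 0 - E 1 1 := by
  ext i j; fin_cases i <;> fin_cases j <;> simp [E, Zp]

lemma Xp_ne_Yp : Xp ≠ Yp := fun h => by
  simpa [Xp, Yp, Complex.ext_iff] using congrFun (congrFun h 0) 1

lemma Xp_ne_Zp : Xp ≠ Zp := fun h => by simpa [Xp, Zp] using congrFun (congrFun h 0) 0

lemma Yp_ne_Zp : Yp ≠ Zp := fun h => by simpa [Yp, Zp] using congrFun (congrFun h 0) 0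

/-- The completeness relation `Σ_{P ∈ {1,X,Y,Z}} P ⊗ P = 2 · SWAP`, tested against `B`. -/
lemma bilin_pauli_completeness (B : M₂ →ₗ[ℂ] M₂ →ₗ[ℂ] ℂ) :
    B 1 1 + B Xp Xp + B Yp Yp + B Zp Zp = 2 * ∑ a, ∑ b, B (E a b) (E b a) := by
  simp only [one_eq_E, Xp_eq_E, Yp_eq_E, Zp_eq_E, map_add, map_sub, map_smul,
    LinearMap.add_apply, LinearMap.sub_apply, LinearMap.smul_apply, smul_eq_mul, Fin.sum_univ_two]
  linear_combination
    (B (E 0 1) (E 0 1) + B (E 1 0) (E 1 0) - B (E 0 1) (E 1 0) - B (E 1 0) (E 0 1)) * I_sq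

lemma sum_bilin_proj_self (B : M₂ →ₗ[ℂ] M₂ →ₗ[ℂ] ℂ) (P : M₂) :
    ∑ b : Fin 2, B (proj P b) (proj P b) = (B 1 1 + B P P) / 2 := by
  simp only [proj, Fin.sum_univ_two, map_add, map_smul, LinearMap.add_apply,
    LinearMap.smul_apply, smul_eq_mul, Fin.val_zero, Fin.val_one, pow_zero, pow_one]
  ring

lemma star_phi_dotProduct_mulVec_phi (A : Matrix (Fin 2 × Fin 2) (Fin 2 × Fin 2) ℂ) :
    star phi ⬝ᵥ A *ᵥ phi = (1 / 2) * ∑ i, ∑ j, A (i, i) (j, j) := by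
  have hsqrt : ((Real.sqrt 2 : ℝ) : ℂ)⁻¹ ^ 2 = 1 / 2 := by
    rw [← ofReal_inv, ← ofReal_pow, inv_pow, Real.sq_sqrt zero_le_two]
    norm_num
  simp only [phi, dotProduct, mulVec, Fintype.sum_prod_type, Fin.sum_univ_two, Pi.star_apply,
    ↓reduceIte, zero_ne_one, one_ne_zero, one_div, ofReal_inv, RCLike.star_def, map_zero,
    map_inv₀, conj_ofReal, mul_zero, add_zero, zero_add]
  linear_combination
    (A (0, 0) (0, 0) + A (0, 0) (1, 1) + A (1, 1) (0, 0) + A (1, 1) (1, 1)) * hsqrt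

lemma idTensorApplyPhi_diag_apply (C : M₂ →ₗ[ℂ] M₂) (i j : Fin 2) :
    idTensorApplyPhi C (i, i) (j, j) = (1 / 2) * C (E i j) i j := by
  simp only [idTensorApplyPhi, Matrix.smul_apply, Matrix.sum_apply, kroneckerMap_apply,
    smul_eq_mul]
  fin_cases i <;> fin_cases j <;> simp [E, Fin.sum_univ_two]

def traceMulForm (C : M₂ →ₗ[ℂ] M₂) : M₂ →ₗ[ℂ] M₂ →ₗ[ℂ] ℂ :=
  ((LinearMap.mul ℂ M₂).comp C).compr₂ (traceLinearMap (Fin 2) ℂ ℂ)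

@[simp]
lemma traceMulForm_apply (C : M₂ →ₗ[ℂ] M₂) (M N : M₂) :
    traceMulForm C M N = (C M * N).trace := rfl

lemma fidelity_eq_sum_traceMulForm (C : M₂ →ₗ[ℂ] M₂) :
    star phi ⬝ᵥ (idTensorApplyPhi C).mulVec phi =
      (1 / 4) * ∑ a, ∑ b, traceMulForm C (E a b) (E b a) := by
  simp only [star_phi_dotProduct_mulVec_phi, idTensorApplyPhi_diag_apply, traceMulForm_apply, E,
    trace_mul_single, MulOpposite.op_one, one_smul, ← Finset.mul_sum]
  ring

/-- for trace-preserving `𝒞`,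
`F(𝒞) = (1/4) Σ_{P∈{X,Y,Z}, b} Tr[𝒞(Π_{P,b}) Π_{P,b}] − 1/2`. -/
theorem entanglement_fidelity_pauli_form
    (C : Matrix (Fin 2) (Fin 2) ℂ →ₗ[ℂ] Matrix (Fin 2) (Fin 2) ℂ)
    (htp : ∀ M, (C M).trace = M.trace) :
    star phi ⬝ᵥ (idTensorApplyPhi C).mulVec phi =
      ((1 : ℂ) / 4) * (∑ P ∈ ({Xp, Yp, Zp} : Finset (Matrix (Fin 2) (Fin 2) ℂ)),
          ∑ b : Fin 2, (C (proj P b) * proj P b).trace) - 1 / 2 := by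
  have htrace_one : traceMulForm C 1 1 = 2 := by simp [htp]
  simp only [← traceMulForm_apply]
  rw [fidelity_eq_sum_traceMulForm, Finset.sum_insert (by simp [Xp_ne_Yp, Xp_ne_Zp]),
    Finset.sum_pair Yp_ne_Zp, sum_bilin_proj_self, sum_bilin_proj_self, sum_bilin_proj_self]
  linear_combination (-1 / 8 : ℂ) * bilin_pauli_completeness (traceMulForm C) - htrace_one / 4

end
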